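/- Let $\theta^\star \in \mathbb{R}^d$ with $\|\theta^\star\| \leq B$, let $h_1,\dots,h_n \in \mathbb{R}^d$, and let $\hat\theta = \Sigma^{-1} \sum_{j=1}^n h_j y_j$ be the ridge regression estimator with $\Sigma = \lambda I_d + \sum_{j=1}^n h_j h_j^\top$, where $y_j = \langle \theta^\star, h_j \rangle$ (noiseless targets). Then for any $h \in \mathbb{R}^d$, $|\langle \hat\theta - \theta^\star, h \rangle| \leq B\sqrt{\lambda}\,\sqrt{h^\top \Sigma^{-1} h}$. -/

import Mathlib

/-!
Since `Σ θ⋆ = λ θ⋆ + ∑ⱼ yⱼ hⱼ`, the error is `θ̂ - θ⋆ = -λ Σ⁻¹ θ⋆`. Cauchy–Schwarz for the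
inner product defined by `Σ⁻¹` bounds `|⟨Σ⁻¹ θ⋆, h⟩|²` by `(θ⋆ᵀ Σ⁻¹ θ⋆) (hᵀ Σ⁻¹ h)`, and
`Σ ⪰ λ I` gives `θ⋆ᵀ Σ⁻¹ θ⋆ ≤ ‖θ⋆‖² / λ ≤ B² / λ`.
-/

open Matrix Finset

namespace Matrix

variable {n : Type*}

theorem PosSemidef.posDef_of_sub_smul_one [DecidableEq n] {S : Matrix n n ℝ} {lam : ℝ}
    (hS : (S - lam • 1).PosSemidef) (hlam : 0 < lam) : S.PosDef := by
  simpa using (PosDef.one.smul hlam).add_posSemidef hS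

variable [Fintype n]

theorem PosSemidef.dotProduct_mulVec_sq_le {M : Matrix n n ℝ} (hM : M.PosSemidef) (x y : n → ℝ) :
    (x ⬝ᵥ M *ᵥ y) ^ 2 ≤ (x ⬝ᵥ M *ᵥ x) * (y ⬝ᵥ M *ᵥ y) := by
  let _ := M.toSeminormedAddCommGroup hM
  let _ := M.toInnerProductSpace hM
  have hcs := real_inner_mul_inner_self_le x y
  change ((M *ᵥ y) ⬝ᵥ star x) * ((M *ᵥ y) ⬝ᵥ star x)
    ≤ ((M *ᵥ x) ⬝ᵥ star x) * ((M *ᵥ y) ⬝ᵥ star y) at hcs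
  simpa only [star_trivial, dotProduct_comm _ x, dotProduct_comm _ y, sq] using hcs

theorem sum_vecMulVec_self_mulVec {ι : Type*} (s : Finset ι) (h : ι → n → ℝ) (x : n → ℝ) :
    (∑ j ∈ s, vecMulVec (h j) (h j)) *ᵥ x = ∑ j ∈ s, (x ⬝ᵥ h j) • h j := by
  simp only [sum_mulVec, vecMulVec_mulVec, op_smul_eq_smul, dotProduct_comm (h _) x]

theorem posSemidef_sum_vecMulVec_self {ι : Type*} (s : Finset ι) (h : ι → n → ℝ) :
    (∑ j ∈ s, vecMulVec (h j) (h j)).PosSemidef :=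
  posSemidef_sum s fun j _ => posSemidef_vecMulVec_self_star (h j)

variable [DecidableEq n] {S : Matrix n n ℝ} {lam : ℝ}

theorem PosSemidef.dotProduct_inv_mulVec_le (hS : (S - lam • 1).PosSemidef) (hlam : 0 < lam)
    (x : n → ℝ) : x ⬝ᵥ S⁻¹ *ᵥ x ≤ (x ⬝ᵥ x) / lam := by
  have hdet : IsUnit S.det := (hS.posDef_of_sub_smul_one hlam).isUnit.map detMonoidHom
  set u := S⁻¹ *ᵥ x
  have hSu : S *ᵥ u = x := by rw [mulVec_mulVec, mul_nonsing_inv S hdet, one_mulVec]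
  -- `xᵀ u = uᵀ S u = uᵀ (S - λ I) u + λ ‖u‖²`
  have hquad : lam * (u ⬝ᵥ u) ≤ x ⬝ᵥ u := by
    have hsplit : x ⬝ᵥ u = u ⬝ᵥ (S - lam • 1) *ᵥ u + lam * (u ⬝ᵥ u) := by
      rw [sub_mulVec, dotProduct_sub, hSu, smul_mulVec, one_mulVec, dotProduct_smul,
        smul_eq_mul, dotProduct_comm x]
      ring
    have hres : 0 ≤ u ⬝ᵥ (S - lam • 1) *ᵥ u := by
      simpa only [star_trivial] using hS.dotProduct_mulVec_nonneg u
    linarith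
  have hcs : (x ⬝ᵥ u) ^ 2 ≤ (x ⬝ᵥ x) * (u ⬝ᵥ u) := by
    simpa only [one_mulVec] using PosSemidef.one.dotProduct_mulVec_sq_le x u
  have hxx : 0 ≤ x ⬝ᵥ x := by simpa using dotProduct_star_self_nonneg x
  have huu : 0 ≤ u ⬝ᵥ u := by simpa using dotProduct_star_self_nonneg u
  rw [le_div_iff₀ hlam]
  rcases le_or_gt (x ⬝ᵥ u) 0 with hneg | hpos
  · nlinarith
  · -- `λ (xᵀu)² ≤ λ ‖x‖² ‖u‖² ≤ ‖x‖² xᵀu`, then cancel `xᵀu > 0`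
    nlinarith [mul_le_mul_of_nonneg_left hquad hxx, mul_le_mul_of_nonneg_left hcs hlam.le]

theorem PosSemidef.dotProduct_inv_mulVec_sq_le (hS : (S - lam • 1).PosSemidef) (hlam : 0 < lam)
    (v x : n → ℝ) : (v ⬝ᵥ S⁻¹ *ᵥ x) ^ 2 ≤ (v ⬝ᵥ S⁻¹ *ᵥ v) * ((x ⬝ᵥ x) / lam) := by
  have hSinv : S⁻¹.PosSemidef := (hS.posDef_of_sub_smul_one hlam).posSemidef.inv
  exact (hSinv.dotProduct_mulVec_sq_le v x).trans <| mul_le_mul_of_nonneg_left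
    (hS.dotProduct_inv_mulVec_le hlam x) (hSinv.dotProduct_mulVec_nonneg v)

theorem inv_mulVec_sum_dotProduct_smul_sub_eq {ι : Type*} [Fintype ι] (h : ι → n → ℝ)
    (hS : S = lam • 1 + ∑ j, vecMulVec (h j) (h j)) (hdet : IsUnit S.det) (x : n → ℝ) :
    S⁻¹ *ᵥ (∑ j, (x ⬝ᵥ h j) • h j) - x = -(lam • S⁻¹ *ᵥ x) := by
  have hdata : ∑ j, (x ⬝ᵥ h j) • h j = S *ᵥ x - lam • x := by
    rw [hS, add_mulVec, sum_vecMulVec_self_mulVec, smul_mulVec, one_mulVec, add_sub_cancel_left]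
  rw [hdata, mulVec_sub, mulVec_mulVec, nonsing_inv_mul S hdet, one_mulVec, mulVec_smul]
  abel

end Matrix

theorem ridge_regression_elliptic_error_bound (d n : ℕ) (lam B : ℝ) (hlam : 0 < lam)
    (θstar : Fin d → ℝ) (hB : Real.sqrt (θstar ⬝ᵥ θstar) ≤ B)
    (h : Fin n → Fin d → ℝ)
    (y : Fin n → ℝ) (hy : ∀ j, y j = θstar ⬝ᵥ h j)
    (S : Matrix (Fin d) (Fin d) ℝ)
    (hS : S = lam • (1 : Matrix (Fin d) (Fin d) ℝ) + ∑ j, vecMulVec (h j) (h j))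
    (θhat : Fin d → ℝ) (hθhat : θhat = S⁻¹ *ᵥ (∑ j, y j • h j)) :
    ∀ v : Fin d → ℝ,
      |(θhat - θstar) ⬝ᵥ v| ≤ B * Real.sqrt lam * Real.sqrt (v ⬝ᵥ (S⁻¹ *ᵥ v)) := by
  intro v
  have hSsub : (S - lam • 1).PosSemidef := by
    rw [hS, add_sub_cancel_left]
    exact posSemidef_sum_vecMulVec_self univ h
  have hdet : IsUnit S.det := (hSsub.posDef_of_sub_smul_one hlam).isUnit.map detMonoidHom
  have herr : θhat - θstar = -(lam • S⁻¹ *ᵥ θstar) := by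
    rw [hθhat, funext hy]
    exact inv_mulVec_sum_dotProduct_smul_sub_eq h hS hdet θstar
  have hq : 0 ≤ v ⬝ᵥ S⁻¹ *ᵥ v := by
    simpa using (hSsub.posDef_of_sub_smul_one hlam).posSemidef.inv.dotProduct_mulVec_nonneg v
  have hB0 : 0 ≤ B := (Real.sqrt_nonneg _).trans hB
  rw [herr, neg_dotProduct, abs_neg, smul_dotProduct, smul_eq_mul, dotProduct_comm]
  refine abs_le_of_sq_le_sq ?_ (by positivity)
  calc (lam * (v ⬝ᵥ S⁻¹ *ᵥ θstar)) ^ 2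
      ≤ lam ^ 2 * ((v ⬝ᵥ S⁻¹ *ᵥ v) * ((θstar ⬝ᵥ θstar) / lam)) := by
        rw [mul_pow]; gcongr; exact hSsub.dotProduct_inv_mulVec_sq_le hlam v θstar
    _ = lam * (v ⬝ᵥ S⁻¹ *ᵥ v) * (θstar ⬝ᵥ θstar) := by field_simp
    _ ≤ lam * (v ⬝ᵥ S⁻¹ *ᵥ v) * B ^ 2 := by gcongr; exact (Real.sqrt_le_iff.mp hB).2
    _ = (B * Real.sqrt lam * Real.sqrt (v ⬝ᵥ S⁻¹ *ᵥ v)) ^ 2 := by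
      rw [mul_pow, mul_pow, Real.sq_sqrt hlam.le, Real.sq_sqrt hq]
      ring
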